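/- arXiv:1203.4306 — 2 statements merged into one kernel-verified Lean document; each statement's English description precedes it below -/
import Mathlib

section
/- Let γ > 1, α > 0 and ρ̄ ≥ 0 be a constant, and let U ⊆ ℝ × ℝ be open. Suppose ρ, u : U → ℝ are twice continuously differentiable, ρ > 0 on U, and the equations ρ_t + (ρu)_x = 0 and (ρu)_t + (ρu² + ρ^γ)_x = (ρ^α u_x)_x hold pointwise on U. Then at every point of U, ∂_t( (1/2)·ρ·(u + ρ^{α−2}ρ_x)² + ρ·Ψ(ρ, ρ̄) ) + ∂_x( (1/2)·ρ·u·(u + ρ^{α−2}ρ_x)² + ρ·u·Ψ(ρ, ρ̄) + u·(ρ^γ − ρ̄^γ) ) + (4γ/(γ+α−1)²)·( ∂_x( ρ^{(γ+α−1)/2} ) )² = 0. -/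
/-!
Let `w = u + ρ^(α-2) ρ_x` be the effective velocity. Differentiating the continuity equation
in `x` gives `ρ (∂ₜ + u ∂ₓ)(ρ^(α-2) ρ_x) = -(ρ^α u_x)_x`, so the viscous term cancels when the
momentum equation is written for `w`: `ρ (∂ₜ + u ∂ₓ) w + P(ρ)_x = 0`. For any `w`, the
continuity equation and `ρ² Ψ'(ρ) = P(ρ) - P(ρ̄)` turn the time derivative of
`½ρw² + ρΨ` plus the space derivative of `½ρuw² + ρuΨ + u(P(ρ) - P(ρ̄))` into
`w ρ (∂ₜ + u ∂ₓ) w + u P(ρ)_x`, which for the effective velocity is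
`(u - w) P(ρ)_x = -γ ρ^(γ+α-3) ρ_x² = -4γ/(γ+α-1)² (∂ₓ ρ^((γ+α-1)/2))²`.
-/

open Real

/-- Partial derivative in the first (space) variable. -/
noncomputable def pderivX (f : ℝ → ℝ → ℝ) (x t : ℝ) : ℝ := deriv (fun y => f y t) x

/-- Partial derivative in the second (time) variable. -/
noncomputable def pderivT (f : ℝ → ℝ → ℝ) (x t : ℝ) : ℝ := deriv (fun s => f x s) t

/-- The pressure potential `Ψ(ρ, ρ̄)` for the pressure law `P(ρ) = ρ^γ`. -/
noncomputable def psi (γ ρ ρb : ℝ) : ℝ :=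
  (1 / ((γ - 1) * ρ)) * (ρ ^ γ - ρb ^ γ - γ * ρb ^ (γ - 1) * (ρ - ρb))

open Filter Topology Function

theorem ContDiffAt.eventually_differentiableAt {𝕜 E F : Type*} [NontriviallyNormedField 𝕜]
    [NormedAddCommGroup E] [NormedSpace 𝕜 E] [NormedAddCommGroup F] [NormedSpace 𝕜 F]
    {g : E → F} {a : E} {n : WithTop ℕ∞} (hg : ContDiffAt 𝕜 n g a) (hn : 1 ≤ n) :
    ∀ᶠ b in 𝓝 a, DifferentiableAt 𝕜 g b :=
  ((hg.of_le hn).eventually (by simp)).mono fun _ hb => hb.differentiableAt one_ne_zero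

section PartialDerivatives

variable {f g : ℝ → ℝ → ℝ} {x t : ℝ} {p : ℝ × ℝ}

theorem hasDerivAt_pderivX (hf : DifferentiableAt ℝ (uncurry f) (x, t)) :
    HasDerivAt (fun y => f y t) (pderivX f x t) x :=
  (hf.comp (f := fun y => (y, t)) x
    (differentiableAt_id.prodMk (differentiableAt_const t))).hasDerivAt

theorem hasDerivAt_pderivT (hf : DifferentiableAt ℝ (uncurry f) (x, t)) :
    HasDerivAt (fun s => f x s) (pderivT f x t) t :=
  (hf.comp (f := fun s => (x, s)) t
    ((differentiableAt_const x).prodMk differentiableAt_id)).hasDerivAt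

theorem pderivX_eq_fderiv (hf : DifferentiableAt ℝ (uncurry f) p) :
    pderivX f p.1 p.2 = fderiv ℝ (uncurry f) p (1, 0) :=
  (hf.hasFDerivAt.comp_hasDerivAt (f := fun y => (y, p.2)) p.1
    ((hasDerivAt_id p.1).prodMk (hasDerivAt_const p.1 p.2))).deriv

theorem pderivT_eq_fderiv (hf : DifferentiableAt ℝ (uncurry f) p) :
    pderivT f p.1 p.2 = fderiv ℝ (uncurry f) p (0, 1) :=
  (hf.hasFDerivAt.comp_hasDerivAt (f := fun s => (p.1, s)) p.2
    ((hasDerivAt_const p.2 p.1).prodMk (hasDerivAt_id p.2))).deriv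

theorem pderivX_mul (hf : DifferentiableAt ℝ (uncurry f) (x, t))
    (hg : DifferentiableAt ℝ (uncurry g) (x, t)) :
    pderivX (fun y s => f y s * g y s) x t = pderivX f x t * g x t + f x t * pderivX g x t :=
  ((hasDerivAt_pderivX hf).fun_mul (hasDerivAt_pderivX hg)).deriv

theorem eq_zero_of_hasDerivAt_slice {G : ℝ × ℝ → ℝ} {a : ℝ}
    (hG : ∀ᶠ q in 𝓝 (x, t), G q = 0) (h : HasDerivAt (fun y => G (y, t)) a x) : a = 0 := by
  have hslice : (fun y => G (y, t)) =ᶠ[𝓝 x] fun _ => 0 :=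
    ((continuous_id.prodMk continuous_const).tendsto' x (x, t) rfl).eventually hG
  exact h.unique ((hasDerivAt_const x 0).congr_of_eventuallyEq hslice)

theorem contDiffAt_uncurry_pderivX {m n : WithTop ℕ∞} (hf : ContDiffAt ℝ n (uncurry f) p)
    (hmn : m + 1 ≤ n) : ContDiffAt ℝ m (uncurry (pderivX f)) p := by
  refine ((hf.fderiv_right hmn).clm_apply
    (contDiffAt_const (c := ((1 : ℝ), (0 : ℝ))))).congr_of_eventuallyEq ?_
  filter_upwards [hf.eventually_differentiableAt (le_add_self.trans hmn)] with q hq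
    using pderivX_eq_fderiv hq

theorem contDiffAt_uncurry_pderivT {m n : WithTop ℕ∞} (hf : ContDiffAt ℝ n (uncurry f) p)
    (hmn : m + 1 ≤ n) : ContDiffAt ℝ m (uncurry (pderivT f)) p := by
  refine ((hf.fderiv_right hmn).clm_apply
    (contDiffAt_const (c := ((0 : ℝ), (1 : ℝ))))).congr_of_eventuallyEq ?_
  filter_upwards [hf.eventually_differentiableAt (le_add_self.trans hmn)] with q hq
    using pderivT_eq_fderiv hq

theorem pderivX_pderivT_comm (hf : ContDiffAt ℝ 2 (uncurry f) p) :
    pderivX (pderivT f) p.1 p.2 = pderivT (pderivX f) p.1 p.2 := by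
  have hdiff := hf.eventually_differentiableAt one_le_two
  have hD : DifferentiableAt ℝ (fderiv ℝ (uncurry f)) p :=
    (hf.fderiv_right (m := 1) le_rfl).differentiableAt one_ne_zero
  have hX : uncurry (pderivX f) =ᶠ[𝓝 p] fun q => fderiv ℝ (uncurry f) q (1, 0) := by
    filter_upwards [hdiff] with q hq using pderivX_eq_fderiv hq
  have hT : uncurry (pderivT f) =ᶠ[𝓝 p] fun q => fderiv ℝ (uncurry f) q (0, 1) := by
    filter_upwards [hdiff] with q hq using pderivT_eq_fderiv hq
  rw [pderivX_eq_fderiv ((contDiffAt_uncurry_pderivT hf le_rfl).differentiableAt one_ne_zero),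
    pderivT_eq_fderiv ((contDiffAt_uncurry_pderivX hf le_rfl).differentiableAt one_ne_zero),
    hX.fderiv_eq, hT.fderiv_eq, fderiv_clm_apply hD (differentiableAt_const _),
    fderiv_clm_apply hD (differentiableAt_const _)]
  simpa using hf.isSymmSndFDerivAt (by simp) (1, 0) (0, 1)

end PartialDerivatives

theorem mul_rpow_sub_one_mul_self (γ b : ℝ) : γ * b ^ (γ - 1) * b = γ * b ^ γ := by
  rcases eq_or_ne b 0 with rfl | hb
  · rcases eq_or_ne γ 0 with rfl | hγ
    · simp
    · simp [zero_rpow hγ]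
  · rw [rpow_sub_one hb]
    field_simp

theorem hasDerivAt_psi {γ z ρb : ℝ} (hγ : γ ≠ 1) (hz : z ≠ 0) :
    HasDerivAt (fun z => psi γ z ρb) ((z ^ γ - ρb ^ γ) / z ^ 2) z := by
  have hpsi : (fun w => psi γ w ρb)
      = fun w => (w ^ γ - ρb ^ γ - γ * ρb ^ (γ - 1) * (w - ρb)) / ((γ - 1) * w) := by
    funext w
    rw [psi]
    ring
  have hN := ((Real.hasDerivAt_rpow_const (p := γ) (Or.inl hz)).sub_const (ρb ^ γ)).fun_sub
    (((hasDerivAt_id' z).sub_const ρb).const_mul (γ * ρb ^ (γ - 1)))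
  rw [hpsi]
  refine (hN.fun_div ((hasDerivAt_id' z).const_mul (γ - 1))
    (mul_ne_zero (sub_ne_zero.mpr hγ) hz)).congr_deriv ?_
  rw [rpow_sub_one hz]
  field_simp
  linear_combination (-1) * mul_rpow_sub_one_mul_self γ ρb

section NavierStokes

variable {γ α : ℝ} {ρ u : ℝ → ℝ → ℝ} {x t : ℝ}

theorem pderivX_continuity_eq (hρ : ContDiffAt ℝ 2 (uncurry ρ) (x, t))
    (hu : ContDiffAt ℝ 2 (uncurry u) (x, t))
    (hmass : ∀ᶠ q : ℝ × ℝ in 𝓝 (x, t),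
      pderivT ρ q.1 q.2 + pderivX (fun y s => ρ y s * u y s) q.1 q.2 = 0) :
    pderivT (pderivX ρ) x t + pderivX (pderivX ρ) x t * u x t
      + 2 * pderivX ρ x t * pderivX u x t + ρ x t * pderivX (pderivX u) x t = 0 := by
  have hmass' : ∀ᶠ q : ℝ × ℝ in 𝓝 (x, t),
      pderivT ρ q.1 q.2 + (pderivX ρ q.1 q.2 * u q.1 q.2 + ρ q.1 q.2 * pderivX u q.1 q.2) = 0 := by
    filter_upwards [hmass, hρ.eventually_differentiableAt one_le_two,
      hu.eventually_differentiableAt one_le_two] with q hq hρq huq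
    rwa [pderivX_mul hρq huq] at hq
  have hρx₁ := (contDiffAt_uncurry_pderivX hρ le_rfl).differentiableAt one_ne_zero
  have hux₁ := (contDiffAt_uncurry_pderivX hu le_rfl).differentiableAt one_ne_zero
  have hslice := (hasDerivAt_pderivX ((contDiffAt_uncurry_pderivT hρ le_rfl).differentiableAt
    one_ne_zero)).fun_add (((hasDerivAt_pderivX hρx₁).fun_mul (hasDerivAt_pderivX
    (hu.differentiableAt two_ne_zero))).fun_add ((hasDerivAt_pderivX
    (hρ.differentiableAt two_ne_zero)).fun_mul (hasDerivAt_pderivX hux₁)))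
  have hderiv := eq_zero_of_hasDerivAt_slice hmass' hslice
  rw [pderivX_pderivT_comm hρ] at hderiv
  linear_combination hderiv

noncomputable abbrev effVel (α : ℝ) (ρ u : ℝ → ℝ → ℝ) (y s : ℝ) : ℝ :=
  u y s + ρ y s ^ (α - 2) * pderivX ρ y s

theorem differentiableAt_uncurry_effVel (hρ : ContDiffAt ℝ 2 (uncurry ρ) (x, t))
    (hu : DifferentiableAt ℝ (uncurry u) (x, t)) (hr : ρ x t ≠ 0) :
    DifferentiableAt ℝ (uncurry (effVel α ρ u)) (x, t) :=
  hu.add (((hρ.differentiableAt two_ne_zero).rpow_const (Or.inl hr)).mul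
    ((contDiffAt_uncurry_pderivX hρ le_rfl).differentiableAt one_ne_zero))

theorem effective_momentum_eq (hρ : ContDiffAt ℝ 2 (uncurry ρ) (x, t))
    (hu : ContDiffAt ℝ 2 (uncurry u) (x, t)) (hr : ρ x t ≠ 0)
    (hmass : ∀ᶠ q : ℝ × ℝ in 𝓝 (x, t),
      pderivT ρ q.1 q.2 + pderivX (fun y s => ρ y s * u y s) q.1 q.2 = 0)
    (hmom : pderivT (fun y s => ρ y s * u y s) x t
        + pderivX (fun y s => ρ y s * u y s ^ 2 + ρ y s ^ γ) x t
        = pderivX (fun y s => ρ y s ^ α * pderivX u y s) x t) :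
    ρ x t * (pderivT (effVel α ρ u) x t + u x t * pderivX (effVel α ρ u) x t)
      + γ * ρ x t ^ (γ - 1) * pderivX ρ x t = 0 := by
  have hρ₁ := hρ.differentiableAt two_ne_zero
  have hu₁ := hu.differentiableAt two_ne_zero
  have hρx₁ := (contDiffAt_uncurry_pderivX hρ le_rfl).differentiableAt one_ne_zero
  have hρx := hasDerivAt_pderivX hρ₁
  have hρt := hasDerivAt_pderivT hρ₁
  have hux := hasDerivAt_pderivX hu₁
  have hut := hasDerivAt_pderivT hu₁
  have hρ_rpow (k : ℝ) := hρx.rpow_const (p := k) (Or.inl hr)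
  have hmass₀ : pderivT ρ x t + (pderivX ρ x t * u x t + ρ x t * pderivX u x t) = 0 := by
    rw [← pderivX_mul hρ₁ hu₁]
    exact hmass.self_of_nhds
  have hmass₁ := pderivX_continuity_eq hρ hu hmass
  have hmomT : pderivT (fun y s => ρ y s * u y s) x t = _ := (hρt.fun_mul hut).deriv
  have hmomX : pderivX (fun y s => ρ y s * u y s ^ 2 + ρ y s ^ γ) x t = _ :=
    ((hρx.fun_mul (hux.fun_pow 2)).fun_add (hρ_rpow γ)).deriv
  have hvisc : pderivX (fun y s => ρ y s ^ α * pderivX u y s) x t = _ :=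
    ((hρ_rpow α).fun_mul (hasDerivAt_pderivX
      ((contDiffAt_uncurry_pderivX hu le_rfl).differentiableAt one_ne_zero))).deriv
  have hwT : pderivT (effVel α ρ u) x t = _ :=
    (hut.fun_add ((hρt.rpow_const (p := α - 2) (Or.inl hr)).fun_mul
      (hasDerivAt_pderivT hρx₁))).deriv
  have hwX : pderivX (effVel α ρ u) x t = _ :=
    (hux.fun_add ((hρ_rpow (α - 2)).fun_mul (hasDerivAt_pderivX hρx₁))).deriv
  -- Writing every power of `ρ` as `ρ^(α-3) ρ^k` makes the identity polynomial.
  have hpow (e : ℝ) (k : ℕ) (he : e = α - 2 - 1 + k) :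
      ρ x t ^ e = ρ x t ^ (α - 2 - 1) * ρ x t ^ k := by
    rw [he, rpow_add_natCast hr]
  rw [hmomT, hmomX, hvisc, hpow (α - 1) 2 (by push_cast; ring),
    hpow α 3 (by push_cast; ring)] at hmom
  rw [hwT, hwX, hpow (α - 2) 1 (by push_cast; ring)]
  linear_combination hmom
    + ((α - 2) * ρ x t ^ (α - 2 - 1) * ρ x t * pderivX ρ x t - u x t) * hmass₀
    + ρ x t ^ (α - 2 - 1) * ρ x t ^ 2 * hmass₁

theorem energy_balance {w : ℝ → ℝ → ℝ} {ρb : ℝ} (hγ : γ ≠ 1)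
    (hρ : DifferentiableAt ℝ (uncurry ρ) (x, t)) (hu : DifferentiableAt ℝ (uncurry u) (x, t))
    (hw : DifferentiableAt ℝ (uncurry w) (x, t)) (hr : ρ x t ≠ 0)
    (hmass : pderivT ρ x t + pderivX (fun y s => ρ y s * u y s) x t = 0) :
    pderivT (fun y s => 1 / 2 * ρ y s * w y s ^ 2 + ρ y s * psi γ (ρ y s) ρb) x t
      + pderivX (fun y s => 1 / 2 * ρ y s * u y s * w y s ^ 2
          + ρ y s * u y s * psi γ (ρ y s) ρb + u y s * (ρ y s ^ γ - ρb ^ γ)) x t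
      = w x t * (ρ x t * (pderivT w x t + u x t * pderivX w x t))
        + u x t * (γ * ρ x t ^ (γ - 1) * pderivX ρ x t) := by
  have hρx := hasDerivAt_pderivX hρ
  have hρt := hasDerivAt_pderivT hρ
  have hux := hasDerivAt_pderivX hu
  have hψ := hasDerivAt_psi (ρb := ρb) hγ hr
  have hT : pderivT (fun y s => 1 / 2 * ρ y s * w y s ^ 2 + ρ y s * psi γ (ρ y s) ρb) x t = _ :=
    (((hρt.const_mul (1 / 2)).fun_mul ((hasDerivAt_pderivT hw).fun_pow 2)).fun_add
      (hρt.fun_mul (hψ.comp t hρt))).deriv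
  have hX : pderivX (fun y s => 1 / 2 * ρ y s * u y s * w y s ^ 2
      + ρ y s * u y s * psi γ (ρ y s) ρb + u y s * (ρ y s ^ γ - ρb ^ γ)) x t = _ :=
    (((((hρx.const_mul (1 / 2)).fun_mul hux).fun_mul ((hasDerivAt_pderivX hw).fun_pow 2)).fun_add
      ((hρx.fun_mul hux).fun_mul (hψ.comp x hρx))).fun_add
      (hux.fun_mul ((hρx.rpow_const (p := γ) (Or.inl hr)).sub_const (ρb ^ γ)))).deriv
  rw [pderivX_mul hρ hu] at hmass
  rw [hT, hX]
  linear_combination (norm := (simp only [comp_apply]; field_simp; ring))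
    (1 / 2 * w x t ^ 2 + psi γ (ρ x t) ρb + (ρ x t ^ γ - ρb ^ γ) / ρ x t) * hmass

theorem sq_pderivX_rpow (hρ : DifferentiableAt ℝ (uncurry ρ) (x, t)) (hr : 0 < ρ x t) (k : ℝ) :
    pderivX (fun y s => ρ y s ^ k) x t ^ 2 = k ^ 2 * ρ x t ^ (2 * k - 2) * pderivX ρ x t ^ 2 := by
  have h : pderivX (fun y s => ρ y s ^ k) x t = _ :=
    ((hasDerivAt_pderivX hρ).rpow_const (p := k) (Or.inl hr.ne')).deriv
  rw [h, show 2 * k - 2 = (k - 1) * (2 : ℕ) by push_cast; ring, rpow_mul_natCast hr.le]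
  ring

end NavierStokes

theorem stmt5_general (γ α ρb : ℝ) (hγ : 1 < γ) (hα : 0 < α)
    (U : Set (ℝ × ℝ)) (hU : IsOpen U) (ρ u : ℝ → ℝ → ℝ)
    (hρ : ContDiffOn ℝ 2 (fun p : ℝ × ℝ => ρ p.1 p.2) U)
    (hu : ContDiffOn ℝ 2 (fun p : ℝ × ℝ => u p.1 p.2) U)
    (hpos : ∀ x t, (x, t) ∈ U → 0 < ρ x t)
    (hmass : ∀ x t, (x, t) ∈ U →
      pderivT ρ x t + pderivX (fun y s => ρ y s * u y s) x t = 0)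
    (hmom : ∀ x t, (x, t) ∈ U →
      pderivT (fun y s => ρ y s * u y s) x t
        + pderivX (fun y s => ρ y s * u y s ^ 2 + ρ y s ^ γ) x t
        = pderivX (fun y s => ρ y s ^ α * pderivX u y s) x t) :
    ∀ x t, (x, t) ∈ U →
      pderivT (fun y s => (1 / 2) * ρ y s
            * (u y s + ρ y s ^ (α - 2) * pderivX ρ y s) ^ 2
            + ρ y s * psi γ (ρ y s) ρb) x t
        + pderivX (fun y s => (1 / 2) * ρ y s * u y s
            * (u y s + ρ y s ^ (α - 2) * pderivX ρ y s) ^ 2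
            + ρ y s * u y s * psi γ (ρ y s) ρb
            + u y s * (ρ y s ^ γ - ρb ^ γ)) x t
        + (4 * γ / (γ + α - 1) ^ 2)
            * (pderivX (fun y s => ρ y s ^ ((γ + α - 1) / 2)) x t) ^ 2 = 0 := by
  intro x t hxt
  have hρ₂ : ContDiffAt ℝ 2 (uncurry ρ) (x, t) := (hρ _ hxt).contDiffAt (hU.mem_nhds hxt)
  have hu₂ : ContDiffAt ℝ 2 (uncurry u) (x, t) := (hu _ hxt).contDiffAt (hU.mem_nhds hxt)
  have hρ₁ := hρ₂.differentiableAt two_ne_zero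
  have hu₁ := hu₂.differentiableAt two_ne_zero
  have hr := hpos x t hxt
  have hmomentum := effective_momentum_eq hρ₂ hu₂ hr.ne'
    (eventually_of_mem (hU.mem_nhds hxt) fun q hq => hmass q.1 q.2 hq) (hmom x t hxt)
  have hγα : γ + α - 1 ≠ 0 := by linarith
  rw [energy_balance hγ.ne' hρ₁ hu₁ (differentiableAt_uncurry_effVel hρ₂ hu₁ hr.ne') hr.ne'
      (hmass x t hxt), sq_pderivX_rpow hρ₁ hr,
    show 2 * ((γ + α - 1) / 2) - 2 = (α - 2) + (γ - 1) by ring, rpow_add hr]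
  field_simp
  linear_combination 4 * (u x t + ρ x t ^ (α - 2) * pderivX ρ x t) * hmomentum

/-- The pointwise Bresch–Desjardins entropy identity (2.2.35) for the
one-dimensional compressible isentropic Navier–Stokes equations with viscosity
`μ(ρ) = ρ^α` and pressure `P(ρ) = ρ^γ`. -/
theorem stmt5 (γ α ρb : ℝ) (hγ : 1 < γ) (hα : 0 < α) (hρb : 0 ≤ ρb)
    (U : Set (ℝ × ℝ)) (hU : IsOpen U) (ρ u : ℝ → ℝ → ℝ)
    (hρ : ContDiffOn ℝ 2 (fun p : ℝ × ℝ => ρ p.1 p.2) U)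
    (hu : ContDiffOn ℝ 2 (fun p : ℝ × ℝ => u p.1 p.2) U)
    (hpos : ∀ x t, (x, t) ∈ U → 0 < ρ x t)
    (hmass : ∀ x t, (x, t) ∈ U →
      pderivT ρ x t + pderivX (fun y s => ρ y s * u y s) x t = 0)
    (hmom : ∀ x t, (x, t) ∈ U →
      pderivT (fun y s => ρ y s * u y s) x t
        + pderivX (fun y s => ρ y s * u y s ^ 2 + ρ y s ^ γ) x t
        = pderivX (fun y s => ρ y s ^ α * pderivX u y s) x t) :
    ∀ x t, (x, t) ∈ U →
      pderivT (fun y s => (1 / 2) * ρ y s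
            * (u y s + ρ y s ^ (α - 2) * pderivX ρ y s) ^ 2
            + ρ y s * psi γ (ρ y s) ρb) x t
        + pderivX (fun y s => (1 / 2) * ρ y s * u y s
            * (u y s + ρ y s ^ (α - 2) * pderivX ρ y s) ^ 2
            + ρ y s * u y s * psi γ (ρ y s) ρb
            + u y s * (ρ y s ^ γ - ρb ^ γ)) x t
        + (4 * γ / (γ + α - 1) ^ 2)
            * (pderivX (fun y s => ρ y s ^ ((γ + α - 1) / 2)) x t) ^ 2 = 0 :=
  stmt5_general γ α ρb hγ hα U hU ρ u hρ hu hpos hmass hmom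
end

section
/- Let γ > 1, α > 1/2, ρ̄ > 0 and E > 0. There exists a constant C > 0, depending only on γ, α, ρ̄ and E, with the following property: if ρ : ℝ → ℝ is continuously differentiable, ρ(x) > 0 for all x, lim_{x→−∞} ρ(x) = ρ̄, ∫_ℝ ρ(x)·Ψ(ρ(x), ρ̄) dx ≤ E and ∫_ℝ ( (ρ^{α−1/2})'(x) )² dx ≤ E, then ρ(x) ≤ C for all x ∈ ℝ. -/
/-!
Put `β = α - 1/2`. By Cauchy–Schwarz, `(ρ^β(x₀) - ρ^β(x))² ≤ (x - x₀) E`, so if `ρ(x₀)` is large then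
`ρ ≥ 2ρ̄` on a whole interval `[x₀, x₀ + L]`. Convexity of `r ↦ r^γ` bounds `ρΨ(ρ, ρ̄)` below by a
constant `c > 0` wherever `ρ ≥ 2ρ̄`, so for `L = (E + 1)/c` the potential energy would exceed `E`.
-/

open Real MeasureTheory Filter

noncomputable def relEnergy (γ ρb r : ℝ) : ℝ :=
  r ^ γ - ρb ^ γ - γ * ρb ^ (γ - 1) * (r - ρb)

theorem mul_psi_eq_relEnergy_div {γ r : ℝ} (ρb : ℝ) (hr : r ≠ 0) :
    r * psi γ r ρb = relEnergy γ ρb r / (γ - 1) := by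
  rw [psi, relEnergy]
  field_simp

theorem rpow_tangent_le {γ x y : ℝ} (hγ : 1 ≤ γ) (hx : 0 ≤ x) (hy : 0 < y) :
    y ^ γ + γ * y ^ (γ - 1) * (x - y) ≤ x ^ γ := by
  have hbern : 1 + γ * (x / y - 1) ≤ (x / y) ^ γ := by
    simpa using one_add_mul_self_le_rpow_one_add (s := x / y - 1)
      (by linarith [div_nonneg hx hy.le]) hγ
  have hyγ : y ^ γ = y ^ (γ - 1) * y := by
    rw [← rpow_add_one hy.ne']; ring_nf
  calc y ^ γ + γ * y ^ (γ - 1) * (x - y)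
      = (1 + γ * (x / y - 1)) * y ^ γ := by rw [hyγ]; field_simp
    _ ≤ (x / y) ^ γ * y ^ γ := mul_le_mul_of_nonneg_right hbern (by positivity)
    _ = x ^ γ := by rw [div_rpow hx hy.le, div_mul_cancel₀ _ (by positivity)]

theorem relEnergy_nonneg {γ ρb r : ℝ} (hγ : 1 ≤ γ) (hρb : 0 < ρb) (hr : 0 ≤ r) :
    0 ≤ relEnergy γ ρb r := by
  have := rpow_tangent_le hγ hr hρb
  rw [relEnergy]; linarith

theorem one_add_lt_two_rpow {γ : ℝ} (hγ : 1 < γ) : 1 + γ < 2 ^ γ := by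
  have := one_add_mul_self_lt_rpow_one_add (s := 1) (by norm_num) one_ne_zero hγ
  norm_num at this
  linarith

theorem relEnergy_ge_of_two_mul_le {γ ρb r : ℝ} (hγ : 1 ≤ γ) (hρb : 0 < ρb) (hr : 2 * ρb ≤ r) :
    (2 ^ γ - 1 - γ) * ρb ^ γ ≤ relEnergy γ ρb r := by
  have htangent := rpow_tangent_le hγ (by linarith) (by linarith : 0 < 2 * ρb)
  have hslope : γ * ρb ^ (γ - 1) * (r - 2 * ρb) ≤ γ * (2 * ρb) ^ (γ - 1) * (r - 2 * ρb) := by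
    gcongr
    linarith
  have h2ρb : (2 * ρb) ^ γ = 2 ^ γ * ρb ^ γ := mul_rpow (by norm_num) hρb.le
  have hρbγ : ρb ^ γ = ρb ^ (γ - 1) * ρb := by
    rw [← rpow_add_one hρb.ne']; ring_nf
  rw [relEnergy]
  nlinarith

/-- Expand `0 ≤ ∫ (f' - s) ^ 2`, where `s` is the mean slope of `f` on `[a, b]`. -/
theorem sq_sub_le_mul_integral_deriv_sq {f : ℝ → ℝ} (hf : ContDiff ℝ 1 f) {a b : ℝ} (hab : a ≤ b) :
    (f b - f a) ^ 2 ≤ (b - a) * ∫ x in a..b, deriv f x ^ 2 := by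
  rcases hab.eq_or_lt with rfl | hab'
  · simp
  have hf' : Continuous (deriv f) := hf.continuous_deriv le_rfl
  have hii : IntervalIntegrable (deriv f) volume a b := hf'.intervalIntegrable a b
  have hii2 : IntervalIntegrable (fun x => deriv f x ^ 2) volume a b :=
    (hf'.pow 2).intervalIntegrable a b
  have hftc : ∫ x in a..b, deriv f x = f b - f a :=
    intervalIntegral.integral_deriv_eq_sub (fun x _ => hf.differentiable one_ne_zero x) hii
  set s := (f b - f a) / (b - a)
  have hexpand : ∫ x in a..b, (deriv f x - s) ^ 2
      = (∫ x in a..b, deriv f x ^ 2) - 2 * s * (f b - f a) + s ^ 2 * (b - a) := by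
    have hsq : (fun x => (deriv f x - s) ^ 2) = fun x => deriv f x ^ 2 - 2 * s * deriv f x + s ^ 2 := by
      ext x; ring
    rw [hsq, intervalIntegral.integral_add (hii2.sub (hii.const_mul _)) intervalIntegrable_const,
      intervalIntegral.integral_sub hii2 (hii.const_mul _), intervalIntegral.integral_const_mul,
      hftc, intervalIntegral.integral_const, smul_eq_mul]
    ring
  have hnonneg : 0 ≤ ∫ x in a..b, (deriv f x - s) ^ 2 :=
    intervalIntegral.integral_nonneg hab fun x _ => sq_nonneg _
  have hs : s * (b - a) = f b - f a := div_mul_cancel₀ _ (sub_ne_zero.mpr hab'.ne')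
  nlinarith

theorem sub_sqrt_mul_le_of_integral_deriv_sq_le {f : ℝ → ℝ} (hf : ContDiff ℝ 1 f) {E L a b : ℝ}
    (hint : Integrable fun x => deriv f x ^ 2) (hE : ∫ x, deriv f x ^ 2 ≤ E)
    (hab : a ≤ b) (hbL : b ≤ a + L) :
    f a - √(L * E) ≤ f b := by
  have hE0 : 0 ≤ E := (integral_nonneg fun x => sq_nonneg _).trans hE
  have hloc : ∫ x in a..b, deriv f x ^ 2 ≤ E := by
    rw [intervalIntegral.integral_of_le hab]
    exact (setIntegral_le_integral hint (.of_forall fun x => sq_nonneg _)).trans hE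
  have hsq : (f a - f b) ^ 2 ≤ L * E :=
    calc (f a - f b) ^ 2 = (f b - f a) ^ 2 := by ring
      _ ≤ (b - a) * ∫ x in a..b, deriv f x ^ 2 := sq_sub_le_mul_integral_deriv_sq hf hab
      _ ≤ L * E := mul_le_mul (by linarith) hloc
          (intervalIntegral.integral_nonneg hab fun x _ => sq_nonneg _) (by linarith)
  linarith [le_sqrt_of_sq_le hsq]

theorem mul_le_integral_mul_psi {γ ρb a L : ℝ} {ρ : ℝ → ℝ} (hγ : 1 < γ) (hρb : 0 < ρb)
    (hL : 0 ≤ L) (hpos : ∀ x, 0 < ρ x) (hint : Integrable fun x => ρ x * psi γ (ρ x) ρb)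
    (hlow : ∀ x ∈ Set.Ioc a (a + L), 2 * ρb ≤ ρ x) :
    (2 ^ γ - 1 - γ) * ρb ^ γ / (γ - 1) * L ≤ ∫ x, ρ x * psi γ (ρ x) ρb := by
  have hγ1 : 0 < γ - 1 := by linarith
  have hnonneg : ∀ x, 0 ≤ ρ x * psi γ (ρ x) ρb := fun x => by
    rw [mul_psi_eq_relEnergy_div ρb (hpos x).ne']
    exact div_nonneg (relEnergy_nonneg hγ.le hρb (hpos x).le) hγ1.le
  have hset : (2 ^ γ - 1 - γ) * ρb ^ γ / (γ - 1) * L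
      ≤ ∫ x in Set.Ioc a (a + L), ρ x * psi γ (ρ x) ρb := by
    convert setIntegral_ge_of_const_le_real measurableSet_Ioc measure_Ioc_lt_top.ne
      (fun x hx => ?_) hint.integrableOn using 2
    · rw [Real.volume_real_Ioc, add_sub_cancel_left, max_eq_left hL]
    · rw [mul_psi_eq_relEnergy_div ρb (hpos x).ne']
      exact div_le_div_of_nonneg_right (relEnergy_ge_of_two_mul_le hγ.le hρb (hlow x hx)) hγ1.le
  exact hset.trans (setIntegral_le_integral hint (.of_forall hnonneg))

/-- Uniform upper bound for the density (Lemma 3.4): valid for all `α > 1/2`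
and `γ > 1`. -/
theorem stmt9 (γ α ρb E : ℝ) (hγ : 1 < γ) (hα : 1 / 2 < α)
    (hρb : 0 < ρb) (hE : 0 < E) :
    ∃ C > 0, ∀ ρ : ℝ → ℝ, ContDiff ℝ 1 ρ → (∀ x, 0 < ρ x) →
      Tendsto ρ atBot (nhds ρb) →
      Integrable (fun x => ρ x * psi γ (ρ x) ρb) →
      (∫ x, ρ x * psi γ (ρ x) ρb) ≤ E →
      Integrable (fun x => (deriv (fun y => ρ y ^ (α - 1 / 2)) x) ^ 2) →
      (∫ x, (deriv (fun y => ρ y ^ (α - 1 / 2)) x) ^ 2) ≤ E →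
      ∀ x, ρ x ≤ C := by
  have hβ : 0 < α - 1 / 2 := by linarith
  set c := (2 ^ γ - 1 - γ) * ρb ^ γ / (γ - 1)
  have hc : 0 < c := div_pos (mul_pos (by linarith [one_add_lt_two_rpow hγ]) (by positivity))
    (by linarith)
  set L := (E + 1) / c
  set B := (2 * ρb) ^ (α - 1 / 2) + √(L * E)
  have hB : 0 < B := by positivity
  refine ⟨B ^ (α - 1 / 2)⁻¹, by positivity, fun ρ hρ hpos _ hint₁ hE₁ hint₂ hE₂ x₀ => ?_⟩
  by_contra! hx₀
  rw [rpow_inv_lt_iff_of_pos hB.le (hpos x₀).le hβ] at hx₀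
  have hlow : ∀ x ∈ Set.Ioc x₀ (x₀ + L), 2 * ρb ≤ ρ x := fun x hx => by
    have := sub_sqrt_mul_le_of_integral_deriv_sq_le (hρ.rpow_const_of_ne fun x => (hpos x).ne')
      hint₂ hE₂ hx.1.le hx.2
    exact ((rpow_lt_rpow_iff (by positivity) (hpos x).le hβ).mp (by linarith)).le
  have hcL : c * L = E + 1 := mul_div_cancel₀ _ hc.ne'
  linarith [mul_le_integral_mul_psi hγ hρb (by positivity) hpos hint₁ hlow]
end
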